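/- arXiv:0809.2956 — 8 statements merged into one kernel-verified Lean document; each statement's English description precedes it below -/
import Mathlib

section
/- Let u, v, w, z be four points in the Euclidean plane such that dist(u,v) ≤ 1, dist(w,z) ≤ 1, and the segments [u,v] and [w,z] cross. Then there exists a point x ∈ {u,v,w,z} such that dist(x,y) ≤ 1 for every y ∈ {u,v,w,z}. -/
/-- Two segments `[u,v]` and `[w,z]` in the plane *cross* if their four endpoints
are not all collinear and there is a point in the open segment of both. -/
def Crosses (u v w z : EuclideanSpace ℝ (Fin 2)) : Prop :=
  ¬ Collinear ℝ ({u, v, w, z} : Set (EuclideanSpace ℝ (Fin 2))) ∧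
    ∃ c, c ∈ openSegment ℝ u v ∧ c ∈ openSegment ℝ w z

lemma stmt_0_aux (u v w z c : EuclideanSpace ℝ (Fin 2))
    (h1 : dist u c + dist c v ≤ 1) (h2 : dist w c + dist c z ≤ 1)
    (hp : dist u c ≤ dist w c) (hq : dist u c ≤ dist c z) :
    dist u v ≤ 1 ∧ dist u w ≤ 1 ∧ dist u z ≤ 1 := by
  refine ⟨le_trans (dist_triangle u c v) h1, ?_, ?_⟩
  · calc dist u w ≤ dist u c + dist c w := dist_triangle u c w
      _ ≤ 1 := by rw [dist_comm c w]; linarith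
  · calc dist u z ≤ dist u c + dist c z := dist_triangle u c z
      _ ≤ 1 := by linarith

theorem stmt_0 (u v w z : EuclideanSpace ℝ (Fin 2))
    (huv : dist u v ≤ 1) (hwz : dist w z ≤ 1) (hcross : Crosses u v w z) :
    ∃ x ∈ ({u, v, w, z} : Set (EuclideanSpace ℝ (Fin 2))),
      ∀ y ∈ ({u, v, w, z} : Set (EuclideanSpace ℝ (Fin 2))), dist x y ≤ 1 := by
  obtain ⟨-, c, hc1, hc2⟩ := hcross
  have e1 : dist u c + dist c v = dist u v :=
    dist_add_dist_of_mem_segment (openSegment_subset_segment ℝ u v hc1)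
  have e2 : dist w c + dist c z = dist w z :=
    dist_add_dist_of_mem_segment (openSegment_subset_segment ℝ w z hc2)
  have h1 : dist u c + dist c v ≤ 1 := e1 ▸ huv
  have h2 : dist w c + dist c z ≤ 1 := e2 ▸ hwz
  have h1' : dist v c + dist c u ≤ 1 := by rw [dist_comm v c, dist_comm c u]; linarith
  have h2' : dist z c + dist c w ≤ 1 := by rw [dist_comm z c, dist_comm c w]; linarith
  have HU : dist u c ≤ dist w c → dist u c ≤ dist c z →
      ∃ x ∈ ({u, v, w, z} : Set (EuclideanSpace ℝ (Fin 2))),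
      ∀ y ∈ ({u, v, w, z} : Set (EuclideanSpace ℝ (Fin 2))), dist x y ≤ 1 := by
    intro hp hq
    obtain ⟨d1, d2, d3⟩ := stmt_0_aux u v w z c h1 h2 hp hq
    refine ⟨u, by simp, ?_⟩
    intro y hy
    simp only [Set.mem_insert_iff, Set.mem_singleton_iff] at hy
    rcases hy with rfl | rfl | rfl | rfl
    exacts [by simp, d1, d2, d3]
  have HV : dist c v ≤ dist w c → dist c v ≤ dist c z →
      ∃ x ∈ ({u, v, w, z} : Set (EuclideanSpace ℝ (Fin 2))),
      ∀ y ∈ ({u, v, w, z} : Set (EuclideanSpace ℝ (Fin 2))), dist x y ≤ 1 := by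
    intro hp hq
    obtain ⟨d1, d2, d3⟩ := stmt_0_aux v u w z c h1'
      h2 (by rw [dist_comm v c]; exact hp) (by rw [dist_comm v c]; exact hq)
    refine ⟨v, by simp, ?_⟩
    intro y hy
    simp only [Set.mem_insert_iff, Set.mem_singleton_iff] at hy
    rcases hy with rfl | rfl | rfl | rfl
    exacts [d1, by simp, d2, d3]
  have HW : dist w c ≤ dist u c → dist w c ≤ dist c v →
      ∃ x ∈ ({u, v, w, z} : Set (EuclideanSpace ℝ (Fin 2))),
      ∀ y ∈ ({u, v, w, z} : Set (EuclideanSpace ℝ (Fin 2))), dist x y ≤ 1 := by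
    intro hp hq
    obtain ⟨d1, d2, d3⟩ := stmt_0_aux w z u v c h2 h1 hp hq
    refine ⟨w, by simp, ?_⟩
    intro y hy
    simp only [Set.mem_insert_iff, Set.mem_singleton_iff] at hy
    rcases hy with rfl | rfl | rfl | rfl
    exacts [d2, d3, by simp, d1]
  have HZ : dist c z ≤ dist u c → dist c z ≤ dist c v →
      ∃ x ∈ ({u, v, w, z} : Set (EuclideanSpace ℝ (Fin 2))),
      ∀ y ∈ ({u, v, w, z} : Set (EuclideanSpace ℝ (Fin 2))), dist x y ≤ 1 := by
    intro hp hq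
    obtain ⟨d1, d2, d3⟩ := stmt_0_aux z w v u c h2' h1'
      (by rw [dist_comm z c, dist_comm v c]; exact hq)
      (by rw [dist_comm z c, dist_comm c u]; exact hp)
    refine ⟨z, by simp, ?_⟩
    intro y hy
    simp only [Set.mem_insert_iff, Set.mem_singleton_iff] at hy
    rcases hy with rfl | rfl | rfl | rfl
    exacts [d3, d2, d1, by simp]
  rcases le_total (dist u c) (dist c v) with hab | hab <;>
    rcases le_total (dist w c) (dist c z) with hpq | hpq
  · rcases le_total (dist u c) (dist w c) with h | h
    · exact HU h (h.trans hpq)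
    · exact HW h (h.trans hab)
  · rcases le_total (dist u c) (dist c z) with h | h
    · exact HU (h.trans hpq) h
    · exact HZ h (h.trans hab)
  · rcases le_total (dist c v) (dist w c) with h | h
    · exact HV h (h.trans hpq)
    · exact HW (h.trans hab) h
  · rcases le_total (dist c v) (dist c z) with h | h
    · exact HV (h.trans hpq) h
    · exact HZ (h.trans hab) h
end

section
/- Let p and q be distinct points in the Euclidean plane with dist(p,q) ≤ 1, let D be a closed disk (closed ball) with center c and radius r having p and q on its boundary circle (the sphere of center c and radius r), and let D_cap be the set of points x ∈ D such that x and the center c lie weakly on opposite sides of the line through p and q. Then dist(x,y) ≤ 1 for all points x, y ∈ D_cap. -/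
open RealInnerProductSpace

theorem stmt_2 (p q c : EuclideanSpace ℝ (Fin 2)) (r : ℝ)
    (hpq : p ≠ q) (hdist : dist p q ≤ 1)
    (hp : p ∈ Metric.sphere c r) (hq : q ∈ Metric.sphere c r)
    (Dcap : Set (EuclideanSpace ℝ (Fin 2)))
    (hDcap : Dcap = {x | x ∈ Metric.closedBall c r ∧
      (affineSpan ℝ ({p, q} : Set (EuclideanSpace ℝ (Fin 2)))).WOppSide x c}) :
    ∀ x ∈ Dcap, ∀ y ∈ Dcap, dist x y ≤ 1 := by
  subst hDcap
  set s := affineSpan ℝ ({p, q} : Set (EuclideanSpace ℝ (Fin 2))) with hs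
  set m : EuclideanSpace ℝ (Fin 2) := midpoint ℝ p q with hmdef
  set n : EuclideanSpace ℝ (Fin 2) := c - m with hndef
  have hm : m ∈ s := by
    have : midpoint ℝ p q = AffineMap.lineMap p q (2⁻¹ : ℝ) := by
      rw [AffineMap.lineMap_apply]
      simp [midpoint_eq_smul_add, smul_add, sub_smul]
      module
    rw [hmdef, this]
    exact AffineMap.lineMap_mem_affineSpan_pair _ _ _
  -- orthogonality of n to the direction
  have hpc : ‖p - c‖ = r := by
    rw [← dist_eq_norm]; exact Metric.mem_sphere.mp hp
  have hqc : ‖q - c‖ = r := by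
    rw [← dist_eq_norm]; exact Metric.mem_sphere.mp hq
  have hperp : ⟪p - q, n⟫ = 0 := by
    have h1 : p - q = (p - c) - (q - c) := by abel
    have h2 : n = -(2⁻¹ : ℝ) • ((p - c) + (q - c)) := by
      rw [hndef, hmdef, midpoint_eq_smul_add]
      simp only [invOf_eq_inv]
      module
    rw [h1, h2, real_inner_smul_right, inner_sub_left, inner_add_right, inner_add_right,
      real_inner_comm (q - c) (p - c)]
    have e1 := real_inner_self_eq_norm_sq (p - c)
    have e2 := real_inner_self_eq_norm_sq (q - c)
    rw [hpc] at e1; rw [hqc] at e2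
    linarith
  have hdir : ∀ v ∈ s.direction, ⟪v, n⟫ = 0 := by
    intro v hv
    rw [hs, direction_affineSpan, vectorSpan_pair] at hv
    rcases Submodule.mem_span_singleton.mp hv with ⟨t, rfl⟩
    have : (p -ᵥ q : EuclideanSpace ℝ (Fin 2)) = p - q := rfl
    rw [this, real_inner_smul_left, hperp, mul_zero]
  -- key half-plane inequality
  have hside : ∀ z : EuclideanSpace ℝ (Fin 2), s.WOppSide z c → ⟪z - m, n⟫ ≤ 0 := by
    intro z hz
    rcases hz with ⟨p₁, hp₁, p₂, hp₂, hray⟩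
    have h₁ : ⟪z -ᵥ p₁, n⟫ = ⟪z - m, n⟫ := by
      have : (z -ᵥ p₁ : EuclideanSpace ℝ (Fin 2)) = (z - m) + (m - p₁) := by
        rw [vsub_eq_sub]; abel
      rw [this, inner_add_left, hdir (m - p₁) (AffineSubspace.vsub_mem_direction hm hp₁),
        add_zero]
    have h₂ : ⟪p₂ -ᵥ c, n⟫ = ⟪p₂ - m, n⟫ - ‖n‖ ^ 2 := by
      have : (p₂ -ᵥ c : EuclideanSpace ℝ (Fin 2)) = (p₂ - m) - n := by
        rw [vsub_eq_sub, hndef]; abel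
      rw [this, inner_sub_left, real_inner_self_eq_norm_sq]
    have h₃ : ⟪p₂ -ᵥ c, n⟫ = -‖n‖ ^ 2 := by
      rw [h₂, hdir (p₂ - m) (AffineSubspace.vsub_mem_direction hp₂ hm), zero_sub]
    rcases hray with h | h | ⟨a, b, ha, hb, hab⟩
    · rw [← h₁, h, inner_zero_left]
    · -- p₂ = c, so c ∈ s, so n = 0
      have hcs : c ∈ s := by
        have : p₂ = c := by
          have := vsub_eq_zero_iff_eq.mp h; exact this
        rwa [← this]
      have hn0 : n = 0 := by
        have := hdir n (AffineSubspace.vsub_mem_direction hcs hm)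
        have h2 := real_inner_self_eq_norm_sq n
        have : ‖n‖ = 0 := by nlinarith [norm_nonneg n]
        exact norm_eq_zero.mp this
      rw [hn0, inner_zero_right]
    · have : a * ⟪z -ᵥ p₁, n⟫ = b * ⟪p₂ -ᵥ c, n⟫ := by
        rw [← real_inner_smul_left, ← real_inner_smul_left, hab]
      rw [h₁, h₃] at this
      nlinarith [sq_nonneg ‖n‖]
  -- key distance bound
  have hr2 : r ^ 2 = ‖p - m‖ ^ 2 + ‖n‖ ^ 2 := by
    have h1 : p - c = (p - m) - n := by rw [hndef]; abel
    have h2 : ⟪p - m, n⟫ = 0 := by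
      have : p - m = (2⁻¹ : ℝ) • (p - q) := by
        rw [hmdef, midpoint_eq_smul_add]; simp only [invOf_eq_inv]; module
      rw [this, real_inner_smul_left, hperp, mul_zero]
    have := norm_sub_sq_real (p - m) n
    rw [← h1, hpc] at this
    rw [this, h2]; ring
  have key : ∀ z : EuclideanSpace ℝ (Fin 2),
      z ∈ Metric.closedBall c r → s.WOppSide z c → ‖z - m‖ ≤ dist p q / 2 := by
    intro z hzball hzside
    have hzc : ‖z - c‖ ≤ r := by
      rw [← dist_eq_norm]; exact Metric.mem_closedBall.mp hzball
    have hexp : ‖z - m‖ ^ 2 = ‖z - c‖ ^ 2 + 2 * ⟪z - c, n⟫ + ‖n‖ ^ 2 := by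
      have h1 : z - m = (z - c) + n := by rw [hndef]; abel
      have := norm_add_sq_real (z - c) n
      rw [← h1] at this; linarith
    have hin : ⟪z - c, n⟫ = ⟪z - m, n⟫ - ‖n‖ ^ 2 := by
      have h1 : z - c = (z - m) - n := by rw [hndef]; abel
      rw [h1, inner_sub_left, real_inner_self_eq_norm_sq]
    have hzm2 : ‖z - m‖ ^ 2 ≤ ‖p - m‖ ^ 2 := by
      have hzs := hside z hzside
      nlinarith [norm_nonneg (z - c), norm_nonneg (z - m)]
    have hpm : ‖p - m‖ = dist p q / 2 := by
      have : p - m = (2⁻¹ : ℝ) • (p - q) := by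
        rw [hmdef, midpoint_eq_smul_add]; simp only [invOf_eq_inv]; module
      rw [this, norm_smul, dist_eq_norm]
      simp
      ring
    rw [← hpm]
    nlinarith [norm_nonneg (z - m), norm_nonneg (p - m)]
  rintro x ⟨hx, hxside⟩ y ⟨hy, hyside⟩
  have hx' := key x hx hxside
  have hy' := key y hy hyside
  have : dist x y ≤ ‖x - m‖ + ‖y - m‖ := by
    rw [dist_eq_norm]
    have : x - y = (x - m) - (y - m) := by abel
    rw [this]
    exact norm_sub_le _ _
  linarith
end

section
/- Let p and q be distinct points in the Euclidean plane, let D be a closed disk (closed ball) with center c and radius r having p and q on its boundary circle, and let D_cap be the set of points x ∈ D such that x and the center c lie weakly on opposite sides of the line through p and q. Then D_cap is contained in the closed ball of center midpoint(p,q) and radius dist(p,q)/2. -/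
open RealInnerProductSpace

theorem stmt_3 (p q c : EuclideanSpace ℝ (Fin 2)) (r : ℝ)
    (hpq : p ≠ q)
    (hp : p ∈ Metric.sphere c r) (hq : q ∈ Metric.sphere c r)
    (Dcap : Set (EuclideanSpace ℝ (Fin 2)))
    (hDcap : Dcap = {x | x ∈ Metric.closedBall c r ∧
      (affineSpan ℝ ({p, q} : Set (EuclideanSpace ℝ (Fin 2)))).WOppSide x c}) :
    Dcap ⊆ Metric.closedBall (midpoint ℝ p q) (dist p q / 2) := by
  subst hDcap
  rintro x ⟨hxball, hside⟩
  set m := midpoint ℝ p q with hm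
  have hmmem : m ∈ affineSpan ℝ ({p, q} : Set (EuclideanSpace ℝ (Fin 2))) := by
    rw [hm, ← lineMap_one_half]
    exact AffineMap.lineMap_mem_affineSpan_pair _ _ _
  have hperp : ⟪c - m, p - q⟫ = 0 := by
    have h := EuclideanGeometry.inner_vsub_vsub_of_dist_eq_of_dist_eq
      (c₁ := m) (c₂ := c) (p₁ := q) (p₂ := p) ?_ ?_
    · simpa [vsub_eq_sub] using h
    · show dist q (midpoint ℝ p q) = dist p (midpoint ℝ p q)
      rw [dist_right_midpoint, dist_left_midpoint]
    · rw [Metric.mem_sphere] at hp hq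
      rw [hp, hq]
  -- any point of the line has zero inner product with c - m after subtracting m
  have key : ∀ y ∈ affineSpan ℝ ({p, q} : Set (EuclideanSpace ℝ (Fin 2))),
      ⟪y - m, c - m⟫ = 0 := by
    intro y hy
    have hdir : y - m ∈ (affineSpan ℝ ({p, q} : Set (EuclideanSpace ℝ (Fin 2)))).direction := by
      simpa [vsub_eq_sub] using AffineSubspace.vsub_mem_direction hy hmmem
    rw [direction_affineSpan, vectorSpan_pair] at hdir
    obtain ⟨t, ht⟩ := Submodule.mem_span_singleton.mp hdir
    rw [← ht, vsub_eq_sub, real_inner_smul_left, real_inner_comm, hperp, mul_zero]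
  -- the side condition gives nonpositive inner product
  obtain ⟨p₁, hp₁, p₂, hp₂, hray⟩ := hside
  have hin1 : ⟪x - p₁, c - m⟫ = ⟪x - m, c - m⟫ := by
    have : x - p₁ = (x - m) - (p₁ - m) := by abel
    rw [this, inner_sub_left, key p₁ hp₁]
    ring
  have hin2 : ⟪p₂ - c, c - m⟫ = -‖c - m‖ ^ 2 := by
    have : p₂ - c = (p₂ - m) - (c - m) := by abel
    rw [this, inner_sub_left, key p₂ hp₂, real_inner_self_eq_norm_sq]
    ring
  have hineq : ⟪x - m, c - m⟫ ≤ 0 := by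
    rw [vsub_eq_sub, vsub_eq_sub] at hray
    rcases hray with h0 | h0 | ⟨a, b, ha, hb, hab⟩
    · rw [← hin1, h0, inner_zero_left]
    · rw [sub_eq_zero] at h0
      subst h0
      have hc0 : p₂ - m = 0 := inner_self_eq_zero.mp (key p₂ hp₂)
      rw [hc0, inner_zero_right]
    · have h1 : a * ⟪x - p₁, c - m⟫ = b * ⟪p₂ - c, c - m⟫ := by
        rw [← real_inner_smul_left, ← real_inner_smul_left, hab]
      rw [hin1, hin2] at h1
      nlinarith [sq_nonneg ‖c - m‖]
  -- Pythagoras for p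
  have hpm : ‖p - m‖ = dist p q / 2 := by
    rw [hm, ← dist_eq_norm, dist_left_midpoint]
    rw [Real.norm_two]
    ring
  have hpc : ‖p - c‖ = r := by rw [← dist_eq_norm]; exact hp
  have hxc : ‖x - c‖ ≤ r := by rw [← dist_eq_norm]; exact hxball
  have hpperp : ⟪p - m, c - m⟫ = 0 := key p (by
    apply subset_affineSpan; simp)
  -- r² = ‖p-m‖² + ‖c-m‖²
  have hpyth : r ^ 2 = ‖p - m‖ ^ 2 + ‖c - m‖ ^ 2 := by
    have hsplit : p - c = (p - m) - (c - m) := by abel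
    have := norm_sub_sq_real (p - m) (c - m)
    rw [← hsplit, hpc, hpperp] at this
    linarith
  have hxsplit : ‖x - c‖ ^ 2 = ‖x - m‖ ^ 2 - 2 * ⟪x - m, c - m⟫ + ‖c - m‖ ^ 2 := by
    have hsplit : x - c = (x - m) - (c - m) := by abel
    have := norm_sub_sq_real (x - m) (c - m)
    rw [← hsplit] at this
    linarith
  have hfin : ‖x - m‖ ^ 2 ≤ (dist p q / 2) ^ 2 := by
    have hxr : ‖x - c‖ ^ 2 ≤ r ^ 2 := by
      have := norm_nonneg (x - c)
      nlinarith
    rw [← hpm]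
    nlinarith
  have : dist x m ≤ dist p q / 2 := by
    rw [dist_eq_norm]
    have h2 : (0 : ℝ) ≤ dist p q / 2 := by positivity
    nlinarith [norm_nonneg (x - m)]
  simpa using this
end

section
/- Let v, y, p, q be points in the Euclidean plane and let D' be the closed disk of center c' and radius r'. Suppose p and q lie on the boundary circle of D', v lies strictly outside D' (dist(v,c') > r'), y does not lie in the interior of D' (dist(y,c') ≥ r'), and the segments [v,y] and [p,q] cross. Then every closed disk having both v and y on its boundary circle contains at least one of p and q: for all centers c and radii r with dist(v,c) = r and dist(y,c) = r, one has dist(p,c) ≤ r or dist(q,c) ≤ r. -/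
/-!
The difference of the powers of a point with respect to the circle `(c, r)` through `v, y` and
the circle `(c', r')` through `p, q` is an affine function of the point. It is negative at `v`,
nonpositive at `y`, hence negative at the crossing point, which lies in the open segment `]v, y[`.
That point also lies in `]p, q[`, so the function is negative at `p` or at `q`; since these lie on
the second circle, that endpoint has negative power with respect to the first one, i.e. lies
inside the disk `(c, r)`.
-/

open RealInnerProductSpace

section Metric

variable {X : Type*} [PseudoMetricSpace X] {c c' x : X} {r r' : ℝ}

/-- Power of `x` with respect to the circle `(c, r)` minus its power with respect to `(c', r')`;
in a Euclidean space its zero set is the radical axis of the two circles. -/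
def powerDiff (c : X) (r : ℝ) (c' : X) (r' : ℝ) (x : X) : ℝ :=
  (dist x c ^ 2 - r ^ 2) - (dist x c' ^ 2 - r' ^ 2)

theorem powerDiff_neg_of_dist_eq_of_lt (hx : dist x c = r) (hx' : r' < dist x c')
    (hr' : 0 ≤ r') : powerDiff c r c' r' x < 0 := by
  rw [powerDiff, hx, sub_self, zero_sub, neg_lt_zero, sub_pos]
  exact pow_lt_pow_left₀ hx' hr' two_ne_zero

theorem powerDiff_nonpos_of_dist_eq_of_le (hx : dist x c = r) (hx' : r' ≤ dist x c')
    (hr' : 0 ≤ r') : powerDiff c r c' r' x ≤ 0 := by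
  rw [powerDiff, hx, sub_self, zero_sub, neg_nonpos, sub_nonneg]
  exact pow_le_pow_left₀ hr' hx' 2

theorem dist_le_of_powerDiff_neg (hx : dist x c' = r') (hr : 0 ≤ r)
    (hneg : powerDiff c r c' r' x < 0) : dist x c ≤ r := by
  rw [powerDiff, hx, sub_self, sub_zero, sub_neg] at hneg
  exact ((pow_lt_pow_iff_left₀ dist_nonneg hr two_ne_zero).mp hneg).le

end Metric

section InnerProductSpace

variable {E : Type*} [NormedAddCommGroup E] [InnerProductSpace ℝ E] (c : E) (r : ℝ) (c' : E)
  (r' : ℝ)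

theorem powerDiff_eq_inner (x : E) :
    powerDiff c r c' r' x = 2 * ⟪x, c' - c⟫ + (‖c‖ ^ 2 - r ^ 2 - ‖c'‖ ^ 2 + r' ^ 2) := by
  simp only [powerDiff, dist_eq_norm, norm_sub_sq_real, inner_sub_right]
  ring

theorem powerDiff_affineCombination {a b : ℝ} (hab : a + b = 1) (u w : E) :
    powerDiff c r c' r' (a • u + b • w) =
      a * powerDiff c r c' r' u + b * powerDiff c r c' r' w := by
  simp only [powerDiff_eq_inner, inner_add_left, real_inner_smul_left]
  linear_combination (-(‖c‖ ^ 2 - r ^ 2 - ‖c'‖ ^ 2 + r' ^ 2)) * hab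

variable {c r c' r'} {u w z : E}

theorem powerDiff_neg_of_mem_openSegment (hu : powerDiff c r c' r' u < 0)
    (hw : powerDiff c r c' r' w ≤ 0) (hz : z ∈ openSegment ℝ u w) :
    powerDiff c r c' r' z < 0 := by
  obtain ⟨a, b, ha, hb, hab, rfl⟩ := hz
  rw [powerDiff_affineCombination c r c' r' hab]
  nlinarith

theorem powerDiff_neg_or_neg_of_mem_openSegment (hz : z ∈ openSegment ℝ u w)
    (hneg : powerDiff c r c' r' z < 0) :
    powerDiff c r c' r' u < 0 ∨ powerDiff c r c' r' w < 0 := by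
  by_contra! h
  obtain ⟨a, b, ha, hb, hab, rfl⟩ := hz
  rw [powerDiff_affineCombination c r c' r' hab] at hneg
  nlinarith [h.1, h.2]

end InnerProductSpace

theorem stmt_8 (v y p q c' : EuclideanSpace ℝ (Fin 2)) (r' : ℝ)
    (hp : p ∈ Metric.sphere c' r') (hq : q ∈ Metric.sphere c' r')
    (hv : dist v c' > r') (hy : dist y c' ≥ r')
    (hcross : Crosses v y p q) :
    ∀ (c : EuclideanSpace ℝ (Fin 2)) (r : ℝ),
      dist v c = r → dist y c = r → dist p c ≤ r ∨ dist q c ≤ r := by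
  intro c r hvc hyc
  obtain ⟨-, z, hz_vy, hz_pq⟩ := hcross
  rw [Metric.mem_sphere] at hp hq
  have hr' : 0 ≤ r' := hp ▸ dist_nonneg
  have hr : 0 ≤ r := hvc ▸ dist_nonneg
  have hz : powerDiff c r c' r' z < 0 :=
    powerDiff_neg_of_mem_openSegment (powerDiff_neg_of_dist_eq_of_lt hvc hv hr')
      (powerDiff_nonpos_of_dist_eq_of_le hyc hy hr') hz_vy
  exact (powerDiff_neg_or_neg_of_mem_openSegment hz_pq hz).imp
    (dist_le_of_powerDiff_neg hp hr) (dist_le_of_powerDiff_neg hq hr)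
end

section
/- Let v, y, p, q be points in the Euclidean plane with y, p, q pairwise distinct, and let D₁ be the closed disk of center c₁ and radius r₁ with y, p, q on its boundary circle. Suppose dist(v,c₁) > r₁ (v is strictly outside D₁), dist(v,y) ≤ 1, dist(v,p) ≤ 1, dist(v,q) > 1, and the segments [v,y] and [p,q] cross. Let D₂ be the closed disk of center c₂ and radius r₂ with v and y on its boundary circle and with dist(p,c₂) > r₂ (p is strictly outside D₂). Then every point of the boundary circle of D₁ at distance greater than 1 from v lies in the open interior of D₂: (sphere(c₁,r₁) \ closedBall(v,1)) ⊆ ball(c₂,r₂). -/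
/-!
Powers of a point with respect to two circles differ by an affine function, so
`G z = dist z c₂ ^ 2 - dist z c₁ ^ 2` and `H z = dist z v ^ 2 - dist z c₁ ^ 2` are affine; on the
circle `∂D₁`, `G z ≤ r₂² - r₁²` says that `z ∈ D₂`, and `H z ≤ 1 - r₁²` that `dist z v ≤ 1`.
Suppose `x ∈ ∂D₁` has `dist x v > 1` but is not in the interior of `D₂`. For any `z ∈ ∂D₁ ∩ D₂`
with `dist z v ≤ 1`, `G` separates the chords `[x,p]`, `[z,q]` and `H` separates `[x,q]`,
`[z,p]`. Among four concyclic points some two chords cross (Radon's theorem, plus strict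
convexity of the disk), so `[x,z]` crosses the line `pq`. Taking `z = y` and `z = w`, the point
where `[v,c]` enters `D₁` (`c` the crossing point of `[v,y]` and `[p,q]`), puts `y` and `w` on
the side of `pq` opposite to `x`, although `c ∈ pq` lies strictly between them.
-/

open Metric Module

section AffineSign

variable {V P : Type*} [AddCommGroup V] [Module ℝ V] [AddTorsor V P] (F : P →ᵃ[ℝ] ℝ)
  {a u b : P} {k : ℝ}

lemma AffineMap.apply_le_of_wbtw (h : Wbtw ℝ a u b) (ha : F a ≤ k) (hb : F b ≤ k) : F u ≤ k := by
  obtain ⟨t, ⟨ht₀, ht₁⟩, rfl⟩ := h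
  rw [F.apply_lineMap, AffineMap.lineMap_apply_module, smul_eq_mul, smul_eq_mul]
  nlinarith

lemma AffineMap.apply_lt_of_sbtw (h : Sbtw ℝ a u b) (ha : F a ≤ k) (hb : F b < k) : F u < k := by
  obtain ⟨⟨t, ⟨ht₀, ht₁⟩, rfl⟩, -⟩ := sbtw_iff_mem_image_Ioo_and_ne.1 h
  rw [F.apply_lineMap, AffineMap.lineMap_apply_module, smul_eq_mul, smul_eq_mul]
  nlinarith

lemma AffineMap.lt_apply_of_sbtw (h : Sbtw ℝ a u b) (ha : k < F a) (hb : k ≤ F b) : k < F u := by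
  obtain ⟨⟨t, ⟨ht₀, ht₁⟩, rfl⟩, -⟩ := sbtw_iff_mem_image_Ioo_and_ne.1 h
  rw [F.apply_lineMap, AffineMap.lineMap_apply_module, smul_eq_mul, smul_eq_mul]
  nlinarith

end AffineSign

lemma sbtw_of_mem_openSegment {V : Type*} [AddCommGroup V] [Module ℝ V] {a u b : V}
    (h : u ∈ openSegment ℝ a b) (hab : a ≠ b) : Sbtw ℝ a u b :=
  sbtw_iff_mem_image_Ioo_and_ne.2 ⟨openSegment_eq_image_lineMap ℝ a b ▸ h, hab⟩

section Normed

variable {V : Type*} [NormedAddCommGroup V] [NormedSpace ℝ V] {o : V} {r : ℝ}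

lemma exists_sbtw_mem_sphere {a b : V} (ha : r < dist a o) (hb : dist b o < r) :
    ∃ z, Sbtw ℝ a z b ∧ z ∈ sphere o r := by
  have hcont : ContinuousOn (fun t : ℝ => dist (AffineMap.lineMap a b t) o) (Set.Icc 0 1) :=
    (AffineMap.lineMap_continuous.dist continuous_const).continuousOn
  obtain ⟨t, ht, hzt⟩ := intermediate_value_Icc' zero_le_one hcont
    (by simpa using And.intro hb.le ha.le)
  refine ⟨_, ⟨⟨t, ht, rfl⟩, ?_, ?_⟩, hzt⟩ <;> intro h <;> simp only [h] at hzt <;> linarith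

end Normed

section InnerProduct

variable {V : Type*} [NormedAddCommGroup V] [InnerProductSpace ℝ V]

noncomputable def distSqSubDistSq (a b : V) : V →ᵃ[ℝ] ℝ where
  toFun z := dist z a ^ 2 - dist z b ^ 2
  linear := (2 : ℝ) • innerₛₗ ℝ (b - a)
  map_vadd' z w := by
    simp only [vadd_eq_add, dist_eq_norm, add_sub_assoc, norm_add_sq_real, LinearMap.smul_apply,
      innerₛₗ_apply_apply, smul_eq_mul, inner_sub_right, real_inner_comm w]
    ring

@[simp]
lemma distSqSubDistSq_apply (a b z : V) : distSqSubDistSq a b z = dist z a ^ 2 - dist z b ^ 2 :=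
  rfl

end InnerProduct

section StrictConvex

variable {V : Type*} [NormedAddCommGroup V] [NormedSpace ℝ V] [StrictConvexSpace ℝ V]
  {o : V} {r : ℝ}

lemma Wbtw.eq_or_eq_of_mem_sphere {a u b : V} (h : Wbtw ℝ a u b) (hu : u ∈ sphere o r)
    (ha : a ∈ closedBall o r) (hb : b ∈ closedBall o r) : u = a ∨ u = b := by
  by_contra! hne
  have := (Sbtw.dist_lt_max_dist o ⟨h, hne.1, hne.2⟩).trans_le
    (max_le (mem_closedBall.1 ha) (mem_closedBall.1 hb))
  exact this.ne (mem_sphere.1 hu)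

lemma Wbtw.sbtw_of_wbtw_of_mem_sphere {a b d e u : V} (h : Wbtw ℝ a u b) (h' : Wbtw ℝ d u e)
    (ha : a ∈ sphere o r) (hb : b ∈ sphere o r) (hd : d ∈ sphere o r) (he : e ∈ sphere o r)
    (had : a ≠ d) (hae : a ≠ e) (hbd : b ≠ d) (hbe : b ≠ e) : Sbtw ℝ a u b := by
  refine ⟨h, ?_, ?_⟩ <;> rintro rfl
  · rcases h'.eq_or_eq_of_mem_sphere ha (sphere_subset_closedBall hd)
      (sphere_subset_closedBall he) with h | h
    exacts [had h, hae h]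
  · rcases h'.eq_or_eq_of_mem_sphere hb (sphere_subset_closedBall hd)
      (sphere_subset_closedBall he) with h | h
    exacts [hbd h, hbe h]

lemma mem_of_mem_sphere_of_mem_convexHull [Nontrivial V] {S : Set V} {z : V}
    (hS : S ⊆ closedBall o r) (hz : z ∈ sphere o r) (hzS : z ∈ convexHull ℝ S) : z ∈ S := by
  refine extremePoints_convexHull_subset
    (inter_extremePoints_subset_extremePoints_of_subset (convexHull_min hS (convex_closedBall o r))
      ⟨hzS, ?_⟩)
  rwa [StrictConvexSpace.extremePoints_closedBall_eq_sphere]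

lemma not_subset_singleton_of_mem_convexHull_image [Nontrivial V] {ι : Type*} {f : ι → V}
    (hf : Function.Injective f) (hsph : ∀ i, f i ∈ sphere o r) {J K : Set ι} (hJK : Disjoint J K)
    {u : V} (hJ : u ∈ convexHull ℝ (f '' J)) (hK : u ∈ convexHull ℝ (f '' K)) (i : ι) :
    ¬ J ⊆ {i} := by
  intro hi
  obtain ⟨_, ⟨j, hjJ, rfl⟩⟩ := convexHull_nonempty_iff.1 ⟨u, hJ⟩
  obtain rfl : j = i := hi hjJ
  have hu : u ∈ ({f j} : Set V) := by
    rw [← convexHull_singleton (𝕜 := ℝ), ← Set.image_singleton]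
    exact convexHull_mono (Set.image_mono hi) hJ
  obtain ⟨k, hkK, hkj⟩ := mem_of_mem_sphere_of_mem_convexHull (S := f '' K)
    (Set.image_subset_iff.2 fun k _ => sphere_subset_closedBall (hsph k)) (hsph j) (hu ▸ hK)
  exact Set.disjoint_left.1 hJK hjJ (hf hkj ▸ hkK)

theorem exists_wbtw_wbtw_of_mem_sphere [FiniteDimensional ℝ V] (hV : finrank ℝ V ≤ 2)
    {a b d e : V} (ha : a ∈ sphere o r) (hb : b ∈ sphere o r) (hd : d ∈ sphere o r)
    (he : e ∈ sphere o r) (hab : a ≠ b) (had : a ≠ d) (hae : a ≠ e) (hbd : b ≠ d) (hbe : b ≠ e)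
    (hde : d ≠ e) :
    (∃ u, Wbtw ℝ a u b ∧ Wbtw ℝ d u e) ∨ (∃ u, Wbtw ℝ a u d ∧ Wbtw ℝ b u e) ∨
      (∃ u, Wbtw ℝ a u e ∧ Wbtw ℝ b u d) := by
  have : Nontrivial V := nontrivial_of_ne a b hab
  set f : Fin 4 → V := ![a, b, d, e]
  have hf : Function.Injective f := by
    intro i j hij; fin_cases i <;> fin_cases j <;> simp_all [f, eq_comm]
  have hsph : ∀ i, f i ∈ sphere o r := by intro i; fin_cases i <;> assumption
  have hdep : ¬ AffineIndependent ℝ f := fun hind => by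
    have h₁ := hind.card_le_finrank_succ
    have h₂ := Submodule.finrank_le (vectorSpan ℝ (Set.range f))
    simp only [Fintype.card_fin] at h₁
    omega
  obtain ⟨I, u, huI, huJ⟩ := Convex.radon_partition hdep
  have hsingle {J K : Set (Fin 4)} (hJK : Disjoint J K) (hJ : u ∈ convexHull ℝ (f '' J))
      (hK : u ∈ convexHull ℝ (f '' K)) (i : Fin 4) (hi : J ⊆ {i}) : False :=
    not_subset_singleton_of_mem_convexHull_image hf hsph hJK hJ hK i hi
  have hpair (i j : Fin 4) {J : Set (Fin 4)} (hJ : J ⊆ {i, j}) (hu : u ∈ convexHull ℝ (f '' J)) :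
      Wbtw ℝ (f i) u (f j) := by
    rw [← mem_segment_iff_wbtw, ← convexHull_pair, ← Set.image_pair]
    exact convexHull_mono (Set.image_mono hJ) hu
  wlog h0 : (0 : Fin 4) ∈ I generalizing I
  · exact this Iᶜ huJ (by rwa [compl_compl]) h0
  -- `hsingle` rules out sides with fewer than two points, leaving `I = {0, j}`.
  by_cases h1 : (1 : Fin 4) ∈ I <;> by_cases h2 : (2 : Fin 4) ∈ I <;>
    by_cases h3 : (3 : Fin 4) ∈ I
  · exact (hsingle disjoint_compl_left huJ huI 0 fun i hi => by fin_cases i <;> simp_all).elim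
  · exact (hsingle disjoint_compl_left huJ huI 3 fun i hi => by fin_cases i <;> simp_all).elim
  · exact (hsingle disjoint_compl_left huJ huI 2 fun i hi => by fin_cases i <;> simp_all).elim
  · exact .inl ⟨u, hpair 0 1 (fun i hi => by fin_cases i <;> simp_all) huI,
      hpair 2 3 (fun i hi => by fin_cases i <;> simp_all) huJ⟩
  · exact (hsingle disjoint_compl_left huJ huI 1 fun i hi => by fin_cases i <;> simp_all).elim
  · exact .inr <| .inl ⟨u, hpair 0 2 (fun i hi => by fin_cases i <;> simp_all) huI,
      hpair 1 3 (fun i hi => by fin_cases i <;> simp_all) huJ⟩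
  · exact .inr <| .inr ⟨u, hpair 0 3 (fun i hi => by fin_cases i <;> simp_all) huI,
      hpair 1 2 (fun i hi => by fin_cases i <;> simp_all) huJ⟩
  · exact (hsingle disjoint_compl_right huI huJ 0 fun i hi => by fin_cases i <;> simp_all).elim

theorem exists_sbtw_sbtw_of_mem_sphere [FiniteDimensional ℝ V] (hV : finrank ℝ V ≤ 2)
    {a b d e : V} (ha : a ∈ sphere o r) (hb : b ∈ sphere o r) (hd : d ∈ sphere o r)
    (he : e ∈ sphere o r) (hab : a ≠ b) (had : a ≠ d) (hae : a ≠ e) (hbd : b ≠ d) (hbe : b ≠ e)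
    (hde : d ≠ e) :
    (∃ u, Sbtw ℝ a u b ∧ Sbtw ℝ d u e) ∨ (∃ u, Sbtw ℝ a u d ∧ Sbtw ℝ b u e) ∨
      (∃ u, Sbtw ℝ a u e ∧ Sbtw ℝ b u d) := by
  rcases exists_wbtw_wbtw_of_mem_sphere hV ha hb hd he hab had hae hbd hbe hde with
    ⟨u, h, h'⟩ | ⟨u, h, h'⟩ | ⟨u, h, h'⟩
  · exact .inl ⟨u, h.sbtw_of_wbtw_of_mem_sphere h' ha hb hd he had hae hbd hbe,
      h'.sbtw_of_wbtw_of_mem_sphere h hd he ha hb had.symm hbd.symm hae.symm hbe.symm⟩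
  · exact .inr <| .inl ⟨u, h.sbtw_of_wbtw_of_mem_sphere h' ha hd hb he hab hae hbd.symm hde,
      h'.sbtw_of_wbtw_of_mem_sphere h hb he ha hd hab.symm hbd hae.symm hde.symm⟩
  · exact .inr <| .inr ⟨u, h.sbtw_of_wbtw_of_mem_sphere h' ha he hb hd hab had hbe.symm hde.symm,
      h'.sbtw_of_wbtw_of_mem_sphere h hb hd ha he hab.symm hbe had.symm hde⟩

end StrictConvex

section Plane

variable {V : Type*} [NormedAddCommGroup V] [InnerProductSpace ℝ V] {o : V} {r : ℝ}

lemma notMem_affineSpan_pair_of_mem_sphere {z p q : V} (hz : z ∈ sphere o r)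
    (hp : p ∈ sphere o r) (hq : q ∈ sphere o r) (hzp : z ≠ p) (hzq : z ≠ q) (hpq : p ≠ q) :
    z ∉ line[ℝ, p, q] := fun h =>
  affineIndependent_iff_not_collinear_set.1
    (EuclideanGeometry.Cospherical.affineIndependent_of_ne
      ⟨o, r, by
        simp only [Set.mem_insert_iff, Set.mem_singleton_iff]
        rintro _ (rfl | rfl | rfl) <;> assumption⟩ hzp hzq hpq)
    (collinear_insert_of_mem_affineSpan_pair h)

variable [FiniteDimensional ℝ V]

lemma sOppSide_affineSpan_pair_of_mem_sphere (hV : finrank ℝ V ≤ 2) {x z p q : V}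
    (hx : x ∈ sphere o r) (hz : z ∈ sphere o r) (hp : p ∈ sphere o r) (hq : q ∈ sphere o r)
    (hxz : x ≠ z) (hxp : x ≠ p) (hxq : x ≠ q) (hzp : z ≠ p) (hzq : z ≠ q) (hpq : p ≠ q)
    (hxpzq : ∀ u, Sbtw ℝ x u p → Sbtw ℝ z u q → False)
    (hxqzp : ∀ u, Sbtw ℝ x u q → Sbtw ℝ z u p → False) :
    line[ℝ, p, q].SOppSide x z := by
  rcases exists_sbtw_sbtw_of_mem_sphere hV hx hz hp hq hxz hxp hxq hzp hzq hpq with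
    ⟨u, hxuz, hpuq⟩ | ⟨u, hxup, hzuq⟩ | ⟨u, hxuq, hzup⟩
  · exact hxuz.sOppSide_of_notMem_of_mem
      (notMem_affineSpan_pair_of_mem_sphere hx hp hq hxp hxq hpq) hpuq.wbtw.mem_affineSpan
  · exact (hxpzq u hxup hzuq).elim
  · exact (hxqzp u hxuq hzup).elim

theorem AffineMap.apply_lt_of_crossing_chord (hV : finrank ℝ V ≤ 2) (G H : V →ᵃ[ℝ] ℝ)
    {k l : ℝ} {v c x y p q : V}
    (hx : x ∈ sphere o r) (hy : y ∈ sphere o r) (hp : p ∈ sphere o r) (hq : q ∈ sphere o r)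
    (hv : r < dist v o) (hvcy : Sbtw ℝ v c y) (hpcq : Sbtw ℝ p c q)
    (hGv : G v < k) (hGy : G y ≤ k) (hGp : k < G p)
    (hHv : H v < l) (hHy : H y ≤ l) (hHp : H p ≤ l) (hHq : l < H q) (hHx : l < H x) :
    G x < k := by
  have hc : dist c o < r := by
    simpa [mem_sphere.1 hp, mem_sphere.1 hq] using hpcq.dist_lt_max_dist o
  obtain ⟨w, hvwc, hw⟩ := exists_sbtw_mem_sphere hv hc
  have hGc : G c < k := G.apply_lt_of_sbtw hvcy.symm hGy hGv
  have hGq : G q < k := lt_of_not_ge fun h => (G.lt_apply_of_sbtw hpcq hGp h).not_gt hGc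
  by_contra! hGx
  have hsep : ∀ z ∈ sphere o r, G z ≤ k → H z ≤ l → line[ℝ, p, q].SOppSide x z := by
    intro z hz hGz hHz
    refine sOppSide_affineSpan_pair_of_mem_sphere hV hx hz hp hq
      (ne_of_apply_ne H (by linarith : H z < H x).ne')
      (ne_of_apply_ne H (by linarith : H p < H x).ne')
      (ne_of_apply_ne G (by linarith : G q < G x).ne')
      (ne_of_apply_ne G (by linarith : G z < G p).ne)
      (ne_of_apply_ne H (by linarith : H z < H q).ne)
      (ne_of_apply_ne G (by linarith : G q < G p).ne')
      (fun u hxup hzuq => ?_) (fun u hxuq hzup => ?_)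
    · exact (G.lt_apply_of_sbtw hxup.symm hGp hGx).not_gt (G.apply_lt_of_sbtw hzuq hGz hGq)
    · exact (H.lt_apply_of_sbtw hxuq hHx hHq.le).not_ge (H.apply_le_of_wbtw hzup.wbtw hHz hHp)
  have hxw := hsep w hw (G.apply_lt_of_sbtw hvwc hGv.le hGc).le
    (H.apply_lt_of_sbtw hvwc hHv.le (H.apply_lt_of_sbtw hvcy.symm hHy hHv)).le
  have hwy : line[ℝ, p, q].SOppSide w y :=
    (hvcy.trans_left_right hvwc).sOppSide_of_notMem_of_mem hxw.2.2 hpcq.wbtw.mem_affineSpan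
  exact (hxw.symm.trans (hsep y hy hGy hHy)).not_sOppSide hwy

end Plane

theorem stmt_9_general (v y p q c₁ c₂ : EuclideanSpace ℝ (Fin 2)) (r₁ r₂ : ℝ)
    (hy₁ : y ∈ Metric.sphere c₁ r₁) (hp₁ : p ∈ Metric.sphere c₁ r₁)
    (hq₁ : q ∈ Metric.sphere c₁ r₁)
    (hv₁ : dist v c₁ > r₁)
    (hvy : dist v y ≤ 1) (hvp : dist v p ≤ 1) (hvq : dist v q > 1)
    (hcross : Crosses v y p q)
    (hv₂ : dist v c₂ = r₂) (hy₂ : dist y c₂ = r₂) (hp₂ : dist p c₂ > r₂) :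
    Metric.sphere c₁ r₁ \ Metric.closedBall v 1 ⊆ Metric.ball c₂ r₂ := by
  rintro x ⟨hx₁, hxv⟩
  obtain ⟨-, c, hvcy, hpcq⟩ := hcross
  rw [mem_sphere] at hx₁ hy₁ hp₁ hq₁
  rw [mem_closedBall, not_le] at hxv
  have hr₁ : 0 ≤ r₁ := hy₁ ▸ dist_nonneg
  have hr₂ : 0 ≤ r₂ := hv₂ ▸ dist_nonneg
  have key := AffineMap.apply_lt_of_crossing_chord finrank_euclideanSpace_fin.le
    (distSqSubDistSq c₂ c₁) (distSqSubDistSq v c₁) (k := r₂ ^ 2 - r₁ ^ 2) (l := 1 - r₁ ^ 2)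
    hx₁ hy₁ hp₁ hq₁ hv₁ (sbtw_of_mem_openSegment hvcy (by rintro rfl; linarith))
    (sbtw_of_mem_openSegment hpcq (by rintro rfl; linarith))
    (by simp only [distSqSubDistSq_apply, hv₂]; nlinarith)
    (by simp only [distSqSubDistSq_apply, hy₂, hy₁]; rfl)
    (by simp only [distSqSubDistSq_apply, hp₁]; nlinarith)
    (by simp only [distSqSubDistSq_apply, dist_self]; nlinarith)
    (by simp only [distSqSubDistSq_apply, hy₁, dist_comm y]
        linarith [pow_le_one₀ (n := 2) dist_nonneg hvy])
    (by simp only [distSqSubDistSq_apply, hp₁, dist_comm p]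
        linarith [pow_le_one₀ (n := 2) dist_nonneg hvp])
    (by simp only [distSqSubDistSq_apply, hq₁, dist_comm q]; nlinarith)
    (by simp only [distSqSubDistSq_apply, hx₁]; nlinarith)
  simp only [distSqSubDistSq_apply, hx₁, sub_lt_sub_iff_right] at key
  exact mem_ball.2 (pow_lt_pow_iff_left₀ dist_nonneg hr₂ two_ne_zero |>.1 key)

theorem stmt_9 (v y p q c₁ c₂ : EuclideanSpace ℝ (Fin 2)) (r₁ r₂ : ℝ)
    (hyp : y ≠ p) (hyq : y ≠ q) (hpq : p ≠ q)
    (hy₁ : y ∈ Metric.sphere c₁ r₁) (hp₁ : p ∈ Metric.sphere c₁ r₁)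
    (hq₁ : q ∈ Metric.sphere c₁ r₁)
    (hv₁ : dist v c₁ > r₁)
    (hvy : dist v y ≤ 1) (hvp : dist v p ≤ 1) (hvq : dist v q > 1)
    (hcross : Crosses v y p q)
    (hv₂ : dist v c₂ = r₂) (hy₂ : dist y c₂ = r₂) (hp₂ : dist p c₂ > r₂) :
    Metric.sphere c₁ r₁ \ Metric.closedBall v 1 ⊆ Metric.ball c₂ r₂ :=
  stmt_9_general v y p q c₁ c₂ r₁ r₂ hy₁ hp₁ hq₁ hv₁ hvy hvp hvq hcross hv₂ hy₂ hp₂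
end

section
/- Let v, y, p, q be points in the Euclidean plane with dist(v,y) ≤ 1. Suppose y, p, q lie on the boundary circle of a closed disk D' of center c' and radius r', v lies strictly outside D' (dist(v,c') > r'), and the segments [v,y] and [p,q] cross. Then dist(v,p) ≤ 1 or dist(v,q) ≤ 1. -/
open scoped RealInnerProductSpace

theorem stmt_11 (v y p q c' : EuclideanSpace ℝ (Fin 2)) (r' : ℝ)
    (hvy : dist v y ≤ 1)
    (hy : y ∈ Metric.sphere c' r') (hp : p ∈ Metric.sphere c' r')
    (hq : q ∈ Metric.sphere c' r')
    (hv : dist v c' > r')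
    (hcross : Crosses v y p q) :
    dist v p ≤ 1 ∨ dist v q ≤ 1 := by
  obtain ⟨-, x, hx1, hx2⟩ := hcross
  obtain ⟨a, b, ha, hb, hab, hX⟩ := hx1
  obtain ⟨e, f, he, hf, hef, hX'⟩ := hx2
  rw [Metric.mem_sphere] at hy hp hq
  -- radius is nonnegative
  have hr0 : 0 ≤ r' := hy ▸ dist_nonneg
  -- vector identity for the crossing point
  have hvec : b • (y - v) = e • (p - v) + f • (q - v) := by
    have h1 : a • v + b • y = e • p + f • q := hX.trans hX'.symm
    have lhs : b • (y - v) = (a • v + b • y) - (a + b) • v := by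
      rw [add_smul, smul_sub]; abel
    have rhs : e • (p - v) + f • (q - v) = (e • p + f • q) - (e + f) • v := by
      rw [add_smul, smul_sub, smul_sub]; abel
    rw [lhs, rhs, hab, hef, h1]
  -- scalar consequence via inner product with c' - v
  have E4 : b * ⟪y - v, c' - v⟫ = e * ⟪p - v, c' - v⟫ + f * ⟪q - v, c' - v⟫ := by
    have h := congrArg (fun z : EuclideanSpace ℝ (Fin 2) => ⟪z, c' - v⟫) hvec
    simp only [inner_add_left, real_inner_smul_left] at h
    exact h
  -- norm expansions
  have expand : ∀ z : EuclideanSpace ℝ (Fin 2),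
      ‖z - v - (c' - v)‖ ^ 2 = ‖z - v‖ ^ 2 - 2 * ⟪z - v, c' - v⟫ + ‖c' - v‖ ^ 2 := by
    intro z; exact norm_sub_sq_real _ _
  have hsub : ∀ z : EuclideanSpace ℝ (Fin 2), z - v - (c' - v) = z - c' := by
    intro z; abel
  have E1 : ‖p - v‖ ^ 2 - 2 * ⟪p - v, c' - v⟫ + ‖c' - v‖ ^ 2 = r' ^ 2 := by
    rw [← expand p, hsub p, ← dist_eq_norm, hp]
  have E2 : ‖q - v‖ ^ 2 - 2 * ⟪q - v, c' - v⟫ + ‖c' - v‖ ^ 2 = r' ^ 2 := by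
    rw [← expand q, hsub q, ← dist_eq_norm, hq]
  have E3 : ‖y - v‖ ^ 2 - 2 * ⟪y - v, c' - v⟫ + ‖c' - v‖ ^ 2 = r' ^ 2 := by
    rw [← expand y, hsub y, ← dist_eq_norm, hy]
  -- main algebraic identity
  have main : e * ‖p - v‖ ^ 2 + f * ‖q - v‖ ^ 2
      = b * ‖y - v‖ ^ 2 + (1 - b) * (r' ^ 2 - ‖c' - v‖ ^ 2) := by
    linear_combination e * E1 + f * E2 - b * E3 - 2 * E4 +
      (r' ^ 2 - ‖c' - v‖ ^ 2) * hef
  -- outside the disk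
  have hC : r' ^ 2 < ‖c' - v‖ ^ 2 := by
    rw [dist_comm, dist_eq_norm] at hv
    exact pow_lt_pow_left₀ hv hr0 two_ne_zero
  -- distance facts
  have hny : ‖y - v‖ ^ 2 ≤ 1 := by
    rw [dist_comm, dist_eq_norm] at hvy
    exact pow_le_one₀ (norm_nonneg _) hvy
  have hny0 : (0:ℝ) ≤ ‖y - v‖ ^ 2 := sq_nonneg _
  by_contra h
  push_neg at h
  obtain ⟨h1, h2⟩ := h
  have hnp : 1 < ‖p - v‖ ^ 2 := by
    rw [dist_comm, dist_eq_norm] at h1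
    exact one_lt_pow₀ h1 two_ne_zero
  have hnq : 1 < ‖q - v‖ ^ 2 := by
    rw [dist_comm, dist_eq_norm] at h2
    exact one_lt_pow₀ h2 two_ne_zero
  have hb1 : b < 1 := by linarith
  have s1 : (1 - b) * (r' ^ 2 - ‖c' - v‖ ^ 2) < 0 :=
    mul_neg_of_pos_of_neg (by linarith) (by linarith)
  have s2 : b * ‖y - v‖ ^ 2 ≤ 1 := by
    calc b * ‖y - v‖ ^ 2 ≤ 1 * 1 := by
          apply mul_le_mul (by linarith) hny hny0 (by norm_num)
      _ = 1 := by norm_num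
  have s3 : e * 1 < e * ‖p - v‖ ^ 2 := by
    exact mul_lt_mul_of_pos_left hnp he
  have s4 : f * 1 < f * ‖q - v‖ ^ 2 := by
    exact mul_lt_mul_of_pos_left hnq hf
  linarith
end

section
/- Let v be a point in the Euclidean plane, let ι be a finite index type, and let a, b : ι → ℝ² be such that for every i the points v, a i, b i are affinely independent, and for all i ≠ j the interiors of the triangles convexHull{v, a i, b i} and convexHull{v, a j, b j} are disjoint. Then the sum over i of the angles ∠ (a i) v (b i) is at most 2π. -/
/-!
Put `v` at the origin of `ℂ` and record, for each triangle, the set of directions `θ ∈ ℝ/2πℤ`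
whose ray from the origin meets the interior of the triangle. The triangles are convex and contain
the origin, so a direction shared by two of them would yield a common interior point close to the
origin: these direction sets are pairwise disjoint open subsets of the circle. The directions
strictly between `arg A` and `arg B` all enter the triangle `0 A B`, so its direction set has
measure at least `∠ A 0 B`, and the angles add up to at most the total measure `2π`.
-/

open InnerProductGeometry Set MeasureTheory Complex Function
open scoped Real

instance Real.fact_zero_lt_two_pi : Fact (0 < 2 * π) := ⟨Real.two_pi_pos⟩

theorem Convex.smul_mem_interior_of_le {E : Type*} [AddCommGroup E] [Module ℝ E]
    [TopologicalSpace E] [IsTopologicalAddGroup E] [ContinuousSMul ℝ E] {S : Set E}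
    (hS : Convex ℝ S) (h0 : (0 : E) ∈ S) {u : E} {r r' : ℝ} (hr' : 0 < r') (hle : r' ≤ r)
    (hu : r • u ∈ interior S) : r' • u ∈ interior S := by
  have hr : 0 < r := hr'.trans_le hle
  have := hS.add_smul_mem_interior h0 (by rwa [zero_add]) ⟨div_pos hr' hr, (div_le_one hr).2 hle⟩
  rwa [zero_add, smul_smul, div_mul_cancel₀ _ hr.ne'] at this

theorem AddCircle.volume_le_volume_image_coe {T : ℝ} [Fact (0 < T)] {s : Set ℝ} {t : ℝ}
    (hs : s ⊆ Ioc t (t + T)) : volume s ≤ volume ((↑) '' s : Set (AddCircle T)) := by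
  calc volume s = volume.restrict (Ioc t (t + T)) s := (Measure.restrict_eq_self _ hs).symm
    _ ≤ _ := Measure.le_map_apply_image
        (AddCircle.measurePreserving_mk T t).measurable.aemeasurable s
    _ = _ := by rw [(AddCircle.measurePreserving_mk T t).map_eq]

def rayDirections (S : Set ℂ) : Set (AddCircle (2 * π)) :=
  {θ | ∃ r : ℝ, 0 < r ∧ r • (θ.toCircle : ℂ) ∈ S}

theorem isOpen_rayDirections {S : Set ℂ} (hS : IsOpen S) : IsOpen (rayDirections S) := by
  have : rayDirections S = ⋃ r ∈ Ioi (0 : ℝ), (fun θ ↦ r • (θ.toCircle : ℂ)) ⁻¹' S := by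
    ext; simp [rayDirections]
  rw [this]
  have := AddCircle.continuous_toCircle (T := 2 * π)
  exact isOpen_biUnion fun r _ ↦ hS.preimage (by fun_prop)

theorem disjoint_rayDirections_interior {S S' : Set ℂ} (hS : Convex ℝ S) (hS' : Convex ℝ S')
    (h0 : 0 ∈ S) (h0' : 0 ∈ S') (h : Disjoint (interior S) (interior S')) :
    Disjoint (rayDirections (interior S)) (rayDirections (interior S')) := by
  rw [Set.disjoint_left]
  rintro θ ⟨r, hr, hθ⟩ ⟨r', hr', hθ'⟩
  exact Set.disjoint_left.mp h (hS.smul_mem_interior_of_le h0 (lt_min hr hr') (min_le_left _ _) hθ)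
    (hS'.smul_mem_interior_of_le h0' (lt_min hr hr') (min_le_right _ _) hθ')

theorem sum_volume_rayDirections_le {ι : Type*} [Fintype ι] {S : ι → Set ℂ}
    (hS : ∀ i, Convex ℝ (S i)) (h0 : ∀ i, 0 ∈ S i)
    (hdisj : Pairwise (Disjoint on fun i ↦ interior (S i))) :
    ∑ i, volume (rayDirections (interior (S i))) ≤ ENNReal.ofReal (2 * π) := by
  calc ∑ i, volume (rayDirections (interior (S i)))
      = volume (⋃ i, rayDirections (interior (S i))) := by
        rw [measure_iUnion (fun i j hij ↦ disjoint_rayDirections_interior (hS i) (hS j) (h0 i)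
          (h0 j) (hdisj hij)) fun i ↦ (isOpen_rayDirections isOpen_interior).measurableSet,
          tsum_fintype]
    _ ≤ volume univ := measure_mono (subset_univ _)
    _ = _ := AddCircle.measure_univ _

theorem ofReal_sin_mul_exp_mul_I (θ x : ℝ) :
    (Real.sin θ : ℂ) * exp (x * I) = Real.sin (θ - x) + Real.sin x * exp (θ * I) := by
  rw [exp_mul_I, exp_mul_I, Real.sin_sub]
  push_cast
  ring

theorem exists_pos_smul_add_smul_eq_exp_mul_I {A B : ℂ} {x : ℝ} (hx0 : 0 < x)
    (hx : x < arg (B / A)) (hπ : arg (B / A) < π) :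
    ∃ s t : ℝ, 0 < s ∧ 0 < t ∧ s • A + t • B = exp ((arg A + x) * I) := by
  set θ := arg (B / A)
  have hA : A ≠ 0 := by rintro rfl; simp [θ] at hx; linarith
  have hB : B ≠ 0 := by rintro rfl; simp [θ] at hx; linarith
  have hnA : (‖A‖ : ℂ) ≠ 0 := by exact_mod_cast norm_ne_zero_iff.mpr hA
  have hnB : (‖B‖ : ℂ) ≠ 0 := by exact_mod_cast norm_ne_zero_iff.mpr hB
  have hsin : 0 < Real.sin θ := Real.sin_pos_of_pos_of_lt_pi (hx0.trans hx) hπ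
  have hsinC : (Real.sin θ : ℂ) ≠ 0 := by exact_mod_cast hsin.ne'
  set u := exp (arg A * I)
  set w := exp (θ * I)
  have hA' : (‖A‖ : ℂ) * u = A := norm_mul_exp_arg_mul_I A
  have hB' : (‖B‖ : ℂ) * (u * w) = B := by
    have h := norm_mul_exp_arg_mul_I (B / A)
    rw [norm_div, ofReal_div] at h
    calc (‖B‖ : ℂ) * (u * w) = (‖A‖ * u) * (‖B‖ / ‖A‖ * w) := by field_simp
      _ = B := by rw [hA', h, mul_div_cancel₀ _ hA]
  refine ⟨Real.sin (θ - x) / Real.sin θ / ‖A‖, Real.sin x / Real.sin θ / ‖B‖,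
    by have := Real.sin_pos_of_pos_of_lt_pi (sub_pos.2 hx) (by linarith); positivity,
    by have := Real.sin_pos_of_pos_of_lt_pi hx0 (by linarith); positivity, ?_⟩
  calc _ = ((Real.sin (θ - x) / Real.sin θ / ‖A‖ : ℝ) : ℂ) * (‖A‖ * u)
        + ((Real.sin x / Real.sin θ / ‖B‖ : ℝ) : ℂ) * (‖B‖ * (u * w)) := by
          rw [hA', hB', real_smul, real_smul]
    _ = u * ((Real.sin (θ - x) + Real.sin x * w) / Real.sin θ) := by push_cast; field_simp
    _ = u * exp (x * I) := by rw [← ofReal_sin_mul_exp_mul_I, mul_div_cancel_left₀ _ hsinC]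
    _ = _ := by rw [add_mul, exp_add]

theorem smul_add_smul_mem_interior_convexHull {E : Type*} [NormedAddCommGroup E]
    [NormedSpace ℝ E] [FiniteDimensional ℝ E] (hE : Module.finrank ℝ E = 2) {A B : E}
    (hAB : AffineIndependent ℝ ![0, A, B]) {s t : ℝ} (hs : 0 < s) (ht : 0 < t)
    (hst : s + t < 1) : s • A + t • B ∈ interior (convexHull ℝ {0, A, B}) := by
  have hspan : affineSpan ℝ (range ![0, A, B]) = ⊤ := by
    rw [hAB.affineSpan_eq_top_iff_card_eq_finrank_add_one, hE]; rfl
  let b : AffineBasis (Fin 3) ℝ E := ⟨![0, A, B], hAB, hspan⟩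
  have hb : ⇑b = ![0, A, B] := rfl
  have hw : ∑ i, ![1 - s - t, s, t] i = 1 := by simp [Fin.sum_univ_three]; ring
  have hcomb : Finset.univ.affineCombination ℝ b ![1 - s - t, s, t] = s • A + t • B := by
    rw [Finset.univ.affineCombination_eq_linear_combination _ _ hw]
    simp [hb, Fin.sum_univ_three]
  have hrange : range b = {0, A, B} := by
    rw [hb, Matrix.range_cons, Matrix.range_cons_cons_empty, singleton_union]
  rw [← hrange, b.interior_convexHull, ← hcomb]
  intro i
  rw [b.coord_apply_combination_of_mem (Finset.mem_univ i) hw]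
  fin_cases i <;> simp <;> linarith

theorem im_div_ne_zero_of_affineIndependent {A B : ℂ} (hAB : AffineIndependent ℝ ![0, A, B]) :
    (B / A).im ≠ 0 := by
  rw [affineIndependent_iff_not_collinear_set] at hAB
  intro him
  apply hAB
  obtain rfl | hA := eq_or_ne A 0
  · simp [collinear_pair]
  have hB : B = (B / A).re • A := by
    have hreal : ((B / A).re : ℂ) = B / A := Complex.ext (by simp) (by simp [him])
    rw [real_smul, hreal, div_mul_cancel₀ B hA]
  rw [collinear_iff_of_mem (p₀ := 0) (mem_insert _ _)]
  refine ⟨A, ?_⟩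
  simp only [mem_insert_iff, mem_singleton_iff, vadd_eq_add, add_zero]
  rintro p (rfl | rfl | rfl)
  exacts [⟨0, by simp⟩, ⟨1, by simp⟩, ⟨_, hB⟩]

theorem ofReal_angle_le_volume_rayDirections {A B : ℂ} (hAB : AffineIndependent ℝ ![0, A, B]) :
    ENNReal.ofReal (angle A B) ≤ volume (rayDirections (interior (convexHull ℝ {0, A, B}))) := by
  wlog hpos : 0 < arg (B / A) generalizing A B
  · have hBA : AffineIndependent ℝ ![0, B, A] := by
      rw [affineIndependent_iff_not_collinear_set] at hAB ⊢
      rwa [pair_comm]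
    rw [angle_comm, pair_comm]
    refine this hBA ?_
    have him := im_div_ne_zero_of_affineIndependent hAB
    have hπ : arg (B / A) ≠ π := fun h ↦ him (arg_eq_pi_iff.1 h).2
    have h0 : arg (B / A) ≠ 0 := fun h ↦ him (arg_eq_zero_iff.1 h).2
    rw [← inv_div, arg_inv, if_neg hπ]
    exact neg_pos.2 ((not_lt.1 hpos).lt_of_ne h0)
  have him := im_div_ne_zero_of_affineIndependent hAB
  have hπ : arg (B / A) < π := (arg_le_pi _).lt_of_ne fun h ↦ him (arg_eq_pi_iff.1 h).2
  have hA : A ≠ 0 := by rintro rfl; simp at him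
  have hB : B ≠ 0 := by rintro rfl; simp at him
  set θ := arg (B / A)
  have harc : ((↑) '' Ioo (arg A) (arg A + θ) : Set (AddCircle (2 * π))) ⊆
      rayDirections (interior (convexHull ℝ {0, A, B})) := by
    rintro _ ⟨φ, ⟨h1, h2⟩, rfl⟩
    obtain ⟨s, t, hs, ht, hst⟩ :=
      exists_pos_smul_add_smul_eq_exp_mul_I (x := φ - arg A) (by linarith) (by linarith) hπ
    rw [ofReal_sub, add_sub_cancel] at hst
    refine ⟨(s + t)⁻¹ / 2, by positivity, ?_⟩
    have hφ : (AddCircle.toCircle (φ : AddCircle (2 * π)) : ℂ) = exp (φ * I) := by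
      simp [AddCircle.toCircle_apply_mk, Circle.coe_exp]
    rw [hφ, ← hst, smul_add, smul_smul, smul_smul]
    refine smul_add_smul_mem_interior_convexHull finrank_real_complex hAB (by positivity)
      (by positivity) ?_
    field_simp
    linarith
  calc ENNReal.ofReal (angle A B) = volume (Ioo (arg A) (arg A + θ)) := by
        rw [Real.volume_Ioo, add_sub_cancel_left, angle_comm, angle_eq_abs_arg hB hA,
          abs_of_pos hpos]
    _ ≤ volume ((↑) '' Ioo (arg A) (arg A + θ) : Set (AddCircle (2 * π))) :=
        AddCircle.volume_le_volume_image_coe <|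
          Ioo_subset_Ioc_self.trans (Ioc_subset_Ioc_right (by linarith [Real.pi_pos]))
    _ ≤ _ := measure_mono harc

theorem Complex.sum_angle_le_two_pi {ι : Type*} [Fintype ι] {A B : ι → ℂ}
    (hAB : ∀ i, AffineIndependent ℝ ![0, A i, B i])
    (hdisj : Pairwise (Disjoint on fun i ↦ interior (convexHull ℝ {0, A i, B i}))) :
    ∑ i, angle (A i) (B i) ≤ 2 * π := by
  rw [← ENNReal.ofReal_le_ofReal_iff Real.two_pi_pos.le,
    ENNReal.ofReal_sum_of_nonneg fun i _ ↦ angle_nonneg _ _]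
  calc ∑ i, ENNReal.ofReal (angle (A i) (B i))
      ≤ ∑ i, volume (rayDirections (interior (convexHull ℝ {0, A i, B i}))) :=
        Finset.sum_le_sum fun i _ ↦ ofReal_angle_le_volume_rayDirections (hAB i)
    _ ≤ _ := sum_volume_rayDirections_le (fun _ ↦ convex_convexHull ℝ _)
        (fun _ ↦ subset_convexHull ℝ _ (mem_insert _ _)) hdisj

theorem AffineIsometryEquiv.image_interior_convexHull {E F : Type*} [NormedAddCommGroup E]
    [NormedSpace ℝ E] [NormedAddCommGroup F] [NormedSpace ℝ F] (e : E ≃ᵃⁱ[ℝ] F) (s : Set E) :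
    e '' interior (convexHull ℝ s) = interior (convexHull ℝ (e '' s)) := by
  have h := (e.toAffineEquiv : E →ᵃ[ℝ] F).image_convexHull s
  simp only [AffineEquiv.coe_toAffineMap, AffineIsometryEquiv.coe_toAffineEquiv] at h
  rw [← h]
  exact e.toHomeomorph.image_interior _

open EuclideanGeometry

theorem stmt_12 (v : EuclideanSpace ℝ (Fin 2)) (ι : Type*) [Fintype ι]
    (a b : ι → EuclideanSpace ℝ (Fin 2))
    (hindep : ∀ i, AffineIndependent ℝ ![v, a i, b i])
    (hdisj : ∀ i j, i ≠ j →
      Disjoint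
        (interior (convexHull ℝ ({v, a i, b i} : Set (EuclideanSpace ℝ (Fin 2)))))
        (interior (convexHull ℝ ({v, a j, b j} : Set (EuclideanSpace ℝ (Fin 2)))))) :
    ∑ i, ∠ (a i) v (b i) ≤ 2 * Real.pi := by
  let e : EuclideanSpace ℝ (Fin 2) ≃ᵃⁱ[ℝ] ℂ := (AffineIsometryEquiv.vaddConst ℝ v).symm.trans
    Complex.orthonormalBasisOneI.repr.symm.toAffineIsometryEquiv
  have he : e v = 0 := by simp [e]
  have hangle : ∀ i, ∠ (a i) v (b i) = InnerProductGeometry.angle (e (a i)) (e (b i)) := by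
    intro i
    rw [← e.toAffineIsometry.angle_map]
    simp [EuclideanGeometry.angle, he]
  have hhull : ∀ i, e '' interior (convexHull ℝ {v, a i, b i}) =
      interior (convexHull ℝ {0, e (a i), e (b i)}) := by
    intro i
    rw [e.image_interior_convexHull, image_insert_eq, image_insert_eq, image_singleton, he]
  simp_rw [hangle]
  refine Complex.sum_angle_le_two_pi (fun i ↦ ?_) fun i j hij ↦ ?_
  · have hcomp : e.toAffineEquiv.toAffineMap ∘ ![v, a i, b i] = ![0, e (a i), e (b i)] := by
      funext j
      fin_cases j <;> simp [he]
    simpa only [hcomp] using (hindep i).map' e.toAffineEquiv.toAffineMap e.injective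
  · rw [onFun, ← hhull, ← hhull]
    exact (disjoint_image_iff e.injective).2 (hdisj i j hij)
end

section
/- Let v be a point in the Euclidean plane, let ι be a finite index type, and let a, b : ι → ℝ² be such that for every i the points v, a i, b i are affinely independent, and for all i ≠ j the interiors of the triangles convexHull{v, a i, b i} and convexHull{v, a j, b j} are disjoint. Then the number of indices i with ∠ (a i) v (b i) > π/3 is at most 5. -/
/-!
A triangle with angle `θ < π` at `v` contains, near `v`, the open circular sector of angle `θ`
and any small radius `r` centred at `v`, whose area is `θ r² / 2`. Taking `r` below the
thresholds of all triangles, the sectors of the triangles with `θ > π / 3` are pairwise disjoint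
subsets of the disc of radius `r` about `v`, each of area more than `π r² / 6`; so there are at
most five of them.
-/

open MeasureTheory Set Metric Real InnerProductGeometry Module

lemma Finset.card_lt_of_pairwiseDisjoint_of_lt_measure {α ι : Type*} [MeasurableSpace α]
    {μ : Measure α} {T : Finset ι} {s : ι → Set α} {t : Set α} {c : ENNReal} {n : ℕ}
    (hT : T.Nonempty) (hs : ∀ i ∈ T, MeasurableSet (s i)) (hd : (T : Set ι).PairwiseDisjoint s)
    (hst : ∀ i ∈ T, s i ⊆ t) (hc : ∀ i ∈ T, c < μ (s i)) (ht : μ t ≤ n * c) :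
    T.card < n := by
  by_contra! hn
  have : (n : ENNReal) * c < n * c :=
    calc (n : ENNReal) * c ≤ T.card * c :=
          mul_le_mul_of_nonneg_right (by exact_mod_cast hn) (by positivity)
      _ = ∑ _ ∈ T, c := by rw [Finset.sum_const, nsmul_eq_mul]
      _ < ∑ i ∈ T, μ (s i) := ENNReal.sum_lt_sum_of_nonempty hT hc
      _ = μ (⋃ i ∈ T, s i) := (measure_biUnion_finset hd hs).symm
      _ ≤ μ t := measure_mono (iUnion₂_subset hst)
      _ ≤ n * c := ht
  exact this.false

lemma smul_add_smul_mem_convexHull_zero {𝕜 E : Type*} [Field 𝕜] [LinearOrder 𝕜]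
    [IsStrictOrderedRing 𝕜] [AddCommGroup E] [Module 𝕜 E] (x y : E) {s t : 𝕜} (hs : 0 ≤ s)
    (ht : 0 ≤ t) (hst : s + t ≤ 1) :
    s • x + t • y ∈ convexHull 𝕜 {0, x, y} :=
  mem_convexHull_of_exists_fintype ![1 - s - t, s, t] ![0, x, y]
    (fun i ↦ by fin_cases i <;> simp <;> linarith) (by simp [Fin.sum_univ_three]; ring)
    (fun i ↦ by fin_cases i <;> simp) (by simp [Fin.sum_univ_three])

lemma setLIntegral_Ioo_prod_Ioo_ofReal_fst {r θ : ℝ} (hr : 0 ≤ r) :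
    ∫⁻ p in Ioo 0 r ×ˢ Ioo 0 θ, ENNReal.ofReal p.1 = ENNReal.ofReal (θ * r ^ 2 / 2) := by
  rw [Measure.volume_eq_prod, ← Measure.prod_restrict, lintegral_prod _ (by fun_prop)]
  simp only [lintegral_const, Measure.restrict_apply MeasurableSet.univ, univ_inter, volume_Ioo]
  rw [lintegral_mul_const _ (by fun_prop),
    ← ofReal_integral_eq_lintegral_ofReal (f := fun x : ℝ ↦ x)
      (continuous_id.integrableOn_Icc.mono_set Ioo_subset_Icc_self)
      (ae_restrict_of_forall_mem (s := Ioo 0 r) measurableSet_Ioo fun x hx ↦ hx.1.le),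
    ← integral_Ioc_eq_integral_Ioo, ← intervalIntegral.integral_of_le hr, integral_id,
    ← ENNReal.ofReal_mul (by nlinarith)]
  congr 1
  ring

namespace Complex

def sector (r θ : ℝ) : Set ℂ := Complex.polarCoord.symm '' (Ioo 0 r ×ˢ Ioo 0 θ)

variable {r θ : ℝ}

lemma Ioo_prod_Ioo_subset_polarCoord_target (hθ : θ ≤ π) :
    Ioo 0 r ×ˢ Ioo 0 θ ⊆ polarCoord.target :=
  prod_mono Ioo_subset_Ioi_self (Ioo_subset_Ioo (by linarith [pi_pos]) hθ)

lemma isOpen_sector (hθ : θ ≤ π) : IsOpen (sector r θ) :=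
  Complex.polarCoord.symm.isOpen_image_of_subset_source (isOpen_Ioo.prod isOpen_Ioo)
    (Ioo_prod_Ioo_subset_polarCoord_target hθ)

lemma sector_subset_ball : sector r θ ⊆ ball 0 r := by
  rintro _ ⟨p, ⟨hr, -⟩, rfl⟩
  simpa [abs_of_pos hr.1] using hr.2

lemma volume_sector (hr : 0 ≤ r) (hθ : θ ≤ π) :
    volume (sector r θ) = ENNReal.ofReal (θ * r ^ 2 / 2) := by
  have hs := Ioo_prod_Ioo_subset_polarCoord_target (r := r) hθ
  have hind : ∀ p ∈ polarCoord.target,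
      ENNReal.ofReal p.1 • (sector r θ).indicator 1 (Complex.polarCoord.symm p) =
        (Ioo 0 r ×ˢ Ioo 0 θ).indicator (fun q ↦ ENNReal.ofReal q.1) p := by
    intro p hp
    by_cases hps : p ∈ Ioo 0 r ×ˢ Ioo 0 θ
    · rw [indicator_of_mem hps,
        indicator_of_mem (show _ ∈ sector r θ from mem_image_of_mem _ hps),
        Pi.one_apply, smul_eq_mul, mul_one]
    · rw [indicator_of_notMem hps, indicator_of_notMem, smul_zero]
      rintro ⟨q, hq, hqp⟩
      exact hps (Complex.polarCoord.symm.injOn (hs hq) hp hqp ▸ hq)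
  rw [← lintegral_indicator_one (isOpen_sector hθ).measurableSet,
    ← Complex.lintegral_comp_polarCoord_symm,
    setLIntegral_congr_fun polarCoord.open_target.measurableSet hind,
    lintegral_indicator ((isOpen_Ioo.prod isOpen_Ioo).measurableSet),
    Measure.restrict_restrict_of_subset hs, setLIntegral_Ioo_prod_Ioo_ofReal_fst hr]

lemma sector_subset_convexHull {A B : ℝ} (hA : 0 < A) (hB : 0 < B) (hθ : θ < π)
    (hr : r ≤ Real.sin θ / (A⁻¹ + B⁻¹)) :
    sector r θ ⊆ convexHull ℝ {0, (A : ℂ), B * exp (θ * I)} := by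
  rintro _ ⟨⟨ρ, φ⟩, ⟨⟨hρ, hρr⟩, hφ, hφθ⟩, rfl⟩
  have hsinθ : 0 < Real.sin θ := sin_pos_of_pos_of_lt_pi (hφ.trans hφθ) hθ
  -- the coordinates of `ρ e^{iφ}` in the basis `A, B e^{iθ}`, by the law of sines
  set s := ρ * Real.sin (θ - φ) / (A * Real.sin θ)
  set t := ρ * Real.sin φ / (B * Real.sin θ)
  have hs : 0 ≤ s := div_nonneg (mul_nonneg hρ.le
    (sin_nonneg_of_nonneg_of_le_pi (by linarith) (by linarith))) (by positivity)
  have ht : 0 ≤ t := div_nonneg (mul_nonneg hρ.le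
    (sin_nonneg_of_nonneg_of_le_pi hφ.le (by linarith))) (by positivity)
  have hst : s + t ≤ 1 := by
    have hs' : s ≤ ρ / (A * Real.sin θ) := by
      unfold s; gcongr; exact mul_le_of_le_one_right hρ.le (sin_le_one _)
    have ht' : t ≤ ρ / (B * Real.sin θ) := by
      unfold t; gcongr; exact mul_le_of_le_one_right hρ.le (sin_le_one _)
    have : ρ * (A⁻¹ + B⁻¹) ≤ Real.sin θ := by
      rw [le_div_iff₀ (by positivity)] at hr; nlinarith [inv_pos.2 hA, inv_pos.2 hB]
    calc s + t ≤ ρ / (A * Real.sin θ) + ρ / (B * Real.sin θ) := add_le_add hs' ht'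
      _ = ρ * (A⁻¹ + B⁻¹) / Real.sin θ := by field_simp
      _ ≤ 1 := (div_le_one hsinθ).2 this
  have hre : (s * A + t * B * Real.cos θ : ℂ) = ρ * Real.cos φ := by
    unfold s t; rw [Real.sin_sub]; norm_cast; field_simp; ring
  have him : (t * B * Real.sin θ : ℂ) = ρ * Real.sin φ := by
    unfold t; norm_cast; field_simp
  convert smul_add_smul_mem_convexHull_zero (A : ℂ) (B * exp (θ * I)) hs ht hst using 1
  push_cast at hre him
  rw [Complex.polarCoord_symm_apply, real_smul, real_smul, exp_mul_I, ofReal_cos, ofReal_sin]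
  linear_combination -hre - I * him

lemma sector_subset_interior_convexHull_inter_ball {A B : ℝ} (hA : 0 < A) (hB : 0 < B)
    (hθ : θ < π) (hr : r ≤ Real.sin θ / (A⁻¹ + B⁻¹)) :
    sector r θ ⊆ interior (convexHull ℝ {0, (A : ℂ), B * exp (θ * I)}) ∩ ball 0 r :=
  subset_inter (interior_maximal (sector_subset_convexHull hA hB hθ hr) (isOpen_sector hθ.le))
    sector_subset_ball

lemma exists_linearIsometryEquiv_standard_position {x y : ℂ} (hx : x ≠ 0) (hy : y ≠ 0) :
    ∃ G : ℂ ≃ₗᵢ[ℝ] ℂ, G x = ‖x‖ ∧ G y = ‖y‖ * exp (angle x y * I) := by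
  let R : ℂ ≃ₗᵢ[ℝ] ℂ := rotation (Circle.exp (-x.arg))
  set c : ℂ := exp (↑(-x.arg) * I)
  have hR : ∀ z, R z = c * z := fun z ↦ by
    rw [rotation_apply, Circle.coe_exp]
  have hc : ‖c‖ = 1 := norm_exp_ofReal_mul_I _
  have hcx : c * x = ‖x‖ := by
    conv_lhs => rw [← norm_mul_exp_arg_mul_I x]
    rw [mul_left_comm, ← exp_add, ofReal_neg, neg_mul, neg_add_cancel, exp_zero, mul_one]
  have hcy : c * y = ‖y‖ * exp ((c * y).arg * I) := by
    conv_lhs => rw [← norm_mul_exp_arg_mul_I (c * y)]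
    rw [norm_mul, hc, one_mul]
  have hangle : angle x y = |(c * y).arg| := by
    rw [← angle_mul_left (exp_ne_zero _), hcx, angle_comm,
      angle_eq_abs_arg (mul_ne_zero (exp_ne_zero _) hy) (ofReal_ne_zero.2 (norm_ne_zero_iff.2 hx)),
      div_eq_mul_inv, ← ofReal_inv, arg_mul_real (inv_pos.2 (norm_pos_iff.2 hx))]
  rcases le_or_gt 0 (c * y).arg with harg | harg
  · refine ⟨R, by rw [hR, hcx], ?_⟩
    rw [hR, hcy, hangle, abs_of_nonneg harg]
  · refine ⟨R.trans conjLIE, ?_, ?_⟩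
    · simp [hR, hcx]
    · simp only [LinearIsometryEquiv.trans_apply, hR, conjLIE_apply]
      rw [hcy, hangle, abs_of_neg harg, map_mul, conj_ofReal, ← exp_conj]
      simp

end Complex

namespace AffineIsometryEquiv

variable {V W : Type*} [NormedAddCommGroup V] [InnerProductSpace ℝ V] [NormedAddCommGroup W]
  [InnerProductSpace ℝ W]

lemma image_interior_convexHull_s13 (e : V ≃ᵃⁱ[ℝ] W) (s : Set V) :
    e '' interior (convexHull ℝ s) = interior (convexHull ℝ (e '' s)) := by
  rw [← e.coe_toHomeomorph, e.toHomeomorph.image_interior, e.coe_toHomeomorph]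
  exact congrArg interior (e.toAffineEquiv.toAffineMap.image_convexHull s)

lemma measurePreserving [FiniteDimensional ℝ V] [FiniteDimensional ℝ W] [MeasurableSpace V]
    [BorelSpace V] [MeasurableSpace W] [BorelSpace W] (e : V ≃ᵃⁱ[ℝ] W) :
    MeasurePreserving e := by
  have he : ⇑e = (· + e 0) ∘ e.linearIsometryEquiv := funext fun x ↦ by
    simpa using e.map_vadd 0 x
  rw [he]
  exact (measurePreserving_add_right volume (e 0)).comp e.linearIsometryEquiv.measurePreserving

end AffineIsometryEquiv

open EuclideanGeometry

section TwoDim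

variable {V P : Type*} [NormedAddCommGroup V] [InnerProductSpace ℝ V] [Fact (finrank ℝ V = 2)]
  [MetricSpace P] [NormedAddTorsor V P]

attribute [local instance] FiniteDimensional.of_fact_finrank_eq_two

lemma exists_affineIsometryEquiv_complex_standard_position {v a b : P} (ha : a ≠ v)
    (hb : b ≠ v) :
    ∃ Φ : P ≃ᵃⁱ[ℝ] ℂ, Φ v = 0 ∧ Φ a = dist a v ∧
      Φ b = dist b v * Complex.exp (∠ a v b * Complex.I) := by
  let L : V ≃ₗᵢ[ℝ] ℂ :=
    (stdOrthonormalBasis ℝ V).equiv Complex.orthonormalBasisOneI (finCongr Fact.out)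
  obtain ⟨G, hGa, hGb⟩ := Complex.exists_linearIsometryEquiv_standard_position
    (x := L (a -ᵥ v)) (y := L (b -ᵥ v)) (by simpa using ha) (by simpa using hb)
  refine ⟨(AffineIsometryEquiv.vaddConst ℝ v).symm.trans (L.trans G).toAffineIsometryEquiv,
    by simp, ?_, ?_⟩
  · simpa [dist_eq_norm_vsub] using hGa
  · rw [← L.coe_toLinearIsometry, L.toLinearIsometry.angle_map] at hGb
    simpa [dist_eq_norm_vsub, EuclideanGeometry.angle] using hGb

theorem AffineIndependent.exists_ofReal_angle_mul_sq_le_volume_interior_inter_ball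
    [MeasurableSpace V] [BorelSpace V] {v a b : V} (h : AffineIndependent ℝ ![v, a, b]) :
    ∃ R > 0, ∀ r, 0 ≤ r → r ≤ R → ENNReal.ofReal (∠ a v b * r ^ 2 / 2) ≤
      volume (interior (convexHull ℝ {v, a, b}) ∩ ball v r) := by
  have hnc : ¬Collinear ℝ {a, v, b} := by
    rw [Set.insert_comm]; exact affineIndependent_iff_not_collinear_set.1 h
  have hθ : ∠ a v b < π := angle_lt_pi_of_not_collinear hnc
  obtain ⟨Φ, hv, ha, hb⟩ := exists_affineIsometryEquiv_complex_standard_position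
    (ne₁₂_of_not_collinear hnc) (ne₂₃_of_not_collinear hnc).symm
  have hA : 0 < dist a v := dist_pos.2 (ne₁₂_of_not_collinear hnc)
  have hB : 0 < dist b v := dist_pos.2 (ne₂₃_of_not_collinear hnc).symm
  refine ⟨Real.sin (∠ a v b) / ((dist a v)⁻¹ + (dist b v)⁻¹),
    div_pos (sin_pos_of_pos_of_lt_pi (angle_pos_of_not_collinear hnc) hθ) (by positivity),
    fun r hr0 hr ↦ ?_⟩
  have himage : Φ '' (interior (convexHull ℝ {v, a, b}) ∩ ball v r) =
      interior (convexHull ℝ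
        {0, (dist a v : ℂ), dist b v * Complex.exp (∠ a v b * Complex.I)}) ∩ ball 0 r := by
    rw [image_inter Φ.injective, Φ.image_interior_convexHull_s13, ← Φ.coe_toIsometryEquiv,
      IsometryEquiv.image_ball, Φ.coe_toIsometryEquiv, image_insert_eq, image_insert_eq,
      image_singleton, hv, ha, hb]
  calc ENNReal.ofReal (∠ a v b * r ^ 2 / 2)
      = volume (Complex.sector r (∠ a v b)) := (Complex.volume_sector hr0 hθ.le).symm
    _ = volume (Φ ⁻¹' Complex.sector r (∠ a v b)) :=
      (Φ.measurePreserving.measure_preimage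
        (Complex.isOpen_sector hθ.le).measurableSet.nullMeasurableSet).symm
    _ ≤ volume (interior (convexHull ℝ {v, a, b}) ∩ ball v r) := by
      refine measure_mono ?_
      rw [← preimage_image_eq (interior (convexHull ℝ {v, a, b}) ∩ ball v r) Φ.injective,
        himage]
      exact preimage_mono (Complex.sector_subset_interior_convexHull_inter_ball hA hB hθ hr)

end TwoDim

theorem stmt_13 (v : EuclideanSpace ℝ (Fin 2)) (ι : Type*) [Fintype ι]
    (a b : ι → EuclideanSpace ℝ (Fin 2))
    (hindep : ∀ i, AffineIndependent ℝ ![v, a i, b i])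
    (hdisj : ∀ i j, i ≠ j →
      Disjoint
        (interior (convexHull ℝ ({v, a i, b i} : Set (EuclideanSpace ℝ (Fin 2)))))
        (interior (convexHull ℝ ({v, a j, b j} : Set (EuclideanSpace ℝ (Fin 2)))))) :
    (Finset.univ.filter fun i => Real.pi / 3 < ∠ (a i) v (b i)).card ≤ 5 := by
  by_contra! h6
  obtain ⟨T, hTS, hT⟩ := Finset.exists_subset_card_eq (Nat.succ_le_of_lt h6)
  have hTne : T.Nonempty := Finset.card_pos.1 (by omega)
  have : Fact (finrank ℝ (EuclideanSpace ℝ (Fin 2)) = 2) := ⟨finrank_euclideanSpace_fin⟩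
  choose R hR hvol using fun i ↦
    (hindep i).exists_ofReal_angle_mul_sq_le_volume_interior_inter_ball
  set r := T.inf' hTne R
  have hr : 0 < r := (Finset.lt_inf'_iff hTne).2 fun i _ ↦ hR i
  refine (Finset.card_lt_of_pairwiseDisjoint_of_lt_measure (μ := volume) (n := 6)
    (c := ENNReal.ofReal (π * r ^ 2 / 6)) (t := ball v r) hTne
    (s := fun i ↦ interior (convexHull ℝ {v, a i, b i}) ∩ ball v r)
    (fun i _ ↦ (isOpen_interior.inter isOpen_ball).measurableSet)
    (fun i _ j _ hij ↦ (hdisj i j hij).mono inter_subset_left inter_subset_left)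
    (fun i _ ↦ inter_subset_right) (fun i hi ↦ ?_) ?_).ne hT
  · have hθ := (Finset.mem_filter.1 (hTS hi)).2
    have hr2 := pow_pos hr 2
    calc ENNReal.ofReal (π * r ^ 2 / 6) < ENNReal.ofReal (∠ (a i) v (b i) * r ^ 2 / 2) :=
          (ENNReal.ofReal_lt_ofReal_iff (by nlinarith [pi_pos])).2 (by nlinarith)
      _ ≤ _ := hvol i r hr.le (Finset.inf'_le R hi)
  · rw [EuclideanSpace.volume_ball_fin_two, ← ENNReal.ofReal_pow hr.le,
      ← ENNReal.ofReal_mul (by positivity), Nat.cast_ofNat, ← ENNReal.ofReal_ofNat 6,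
      ← ENNReal.ofReal_mul (by norm_num)]
    exact ENNReal.ofReal_le_ofReal (le_of_eq (by ring))
end
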